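/- Let t0 < t1, A ∈ ℝ^{n×n}, B ∈ ℝ^{n×p}. The control system x' = Ax + Bu is controllable on [t0,t1] if and only if rank M = n, where M = [B, AB, …, A^{n−1}B] ∈ ℝ^{n×np} is the Kalman matrix. -/

import Mathlib

open MeasureTheory Matrix NormedSpace

/-- The Kalman matrix `M = [B, AB, …, A^{n−1}B]`, indexed so that the block column
`k : Fin n` together with the column `j : Fin p` gives the column `A^k B e_j`. -/
noncomputable def kalmanMatrix {n p : ℕ} (A : Matrix (Fin n) (Fin n) ℝ)
    (B : Matrix (Fin n) (Fin p) ℝ) : Matrix (Fin n) (Fin n × Fin p) ℝ :=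
  Matrix.of fun i jk => (A ^ (jk.1 : ℕ) * B) i jk.2

/-- The system `x' = Ax + Bu` is controllable on `[t0, t1]`: for all `x0, x1` there is an
`L²` control `u` such that the solution
`x(t) = e^{(t−t0)A} x0 + ∫_{t0}^t e^{(t−s)A} B u(s) ds` with `x(t0) = x0`
satisfies `x(t1) = x1`. -/
def IsControllableOn {n p : ℕ} (A : Matrix (Fin n) (Fin n) ℝ)
    (B : Matrix (Fin n) (Fin p) ℝ) (t0 t1 : ℝ) : Prop :=
  ∀ x0 x1 : Fin n → ℝ, ∃ u : ℝ → Fin p → ℝ,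
    MemLp u 2 (volume.restrict (Set.Ioc t0 t1)) ∧
    (NormedSpace.exp ((t1 - t0) • A)).mulVec x0
      + (∫ s in t0..t1, (NormedSpace.exp ((t1 - s) • A)).mulVec (B.mulVec (u s))) = x1

section Aux

variable {n p : ℕ} (A : Matrix (Fin n) (Fin n) ℝ) (B : Matrix (Fin n) (Fin p) ℝ)

def vecMulLM (v : Fin n → ℝ) : Matrix (Fin n) (Fin p) ℝ →ₗ[ℝ] (Fin p → ℝ) where
  toFun M := v ᵥ* M
  map_add' M N := by
    funext j
    simp [Matrix.vecMul, dotProduct, mul_add, Finset.sum_add_distrib]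
  map_smul' c M := by
    funext j
    simp [Matrix.vecMul, dotProduct, Finset.mul_sum, mul_left_comm]

@[simp] lemma vecMulLM_apply (v : Fin n → ℝ) (M : Matrix (Fin n) (Fin p) ℝ) :
    vecMulLM v M = v ᵥ* M := rfl

lemma pow_card_eq_sum (hn : 0 < n) : ∃ c : ℕ → ℝ,
    A ^ n = ∑ i ∈ Finset.range n, c i • A ^ i := by
  classical
  set P := A.charpoly with hP
  have hmonic : P.Monic := A.charpoly_monic
  have hdeg : P.natDegree = n := by simp [hP]
  set q : Polynomial ℝ := Polynomial.X ^ n - P with hq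
  have hqdeg : q.natDegree < n := by
    by_cases h0 : q = 0
    · simpa [h0] using hn
    · have hd : q.degree < (n : ℕ) := by
        have h1 : (Polynomial.X ^ n : Polynomial ℝ).degree = P.degree := by
          rw [Polynomial.degree_X_pow, Polynomial.degree_eq_natDegree hmonic.ne_zero, hdeg]
        have h2 := Polynomial.degree_sub_lt h1 (pow_ne_zero _ Polynomial.X_ne_zero)
          (by rw [Polynomial.leadingCoeff_X_pow, hmonic.leadingCoeff])
        rw [Polynomial.degree_X_pow] at h2
        exact h2
      exact (Polynomial.natDegree_lt_iff_degree_lt h0).2 (by exact_mod_cast hd)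
  refine ⟨fun i => q.coeff i, ?_⟩
  have hCH : Polynomial.aeval A P = 0 := A.aeval_self_charpoly
  have h1 : Polynomial.aeval A q = ∑ i ∈ Finset.range n, q.coeff i • A ^ i :=
    Polynomial.aeval_eq_sum_range' hqdeg A
  have h2 : Polynomial.aeval A q = A ^ n := by
    rw [hq, map_sub, hCH, sub_zero, Polynomial.aeval_X_pow]
  rw [← h2, h1]

/-- If `vᵀ AᵏB = 0` for all `k < n`, then for all `k`. -/
lemma vecMul_pow_mul_eq_zero {v : Fin n → ℝ}
    (h : ∀ k, k < n → v ᵥ* (A ^ k * B) = 0) : ∀ k, v ᵥ* (A ^ k * B) = 0 := by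
  rcases Nat.eq_zero_or_pos n with hn | hn
  · subst hn
    intro k
    funext j
    simp [Matrix.vecMul, dotProduct]
  obtain ⟨c, hc⟩ := pow_card_eq_sum A hn
  intro k
  induction k using Nat.strong_induction_on with
  | _ k IH =>
    by_cases hk : k < n
    · exact h k hk
    push_neg at hk
    have hpow : A ^ k * B = ∑ i ∈ Finset.range n, c i • (A ^ (k - n + i) * B) := by
      have : A ^ k = A ^ (k - n) * A ^ n := by
        rw [← pow_add, Nat.sub_add_cancel hk]
      rw [this, hc, Finset.mul_sum, Matrix.sum_mul]
      refine Finset.sum_congr rfl fun i _ => ?_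
      simp [mul_smul_comm, Matrix.smul_mul, Matrix.mul_assoc, pow_add]
    calc v ᵥ* (A ^ k * B)
        = vecMulLM v (∑ i ∈ Finset.range n, c i • (A ^ (k - n + i) * B)) := by
          rw [← hpow]; rfl
      _ = ∑ i ∈ Finset.range n, c i • (v ᵥ* (A ^ (k - n + i) * B)) := by
          rw [map_sum]
          refine Finset.sum_congr rfl fun i _ => ?_
          rw [LinearMap.map_smul]; rfl
      _ = 0 := by
          refine Finset.sum_eq_zero fun i hi => ?_
          have hi' := Finset.mem_range.1 hi
          rw [IH _ (by omega), smul_zero]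

/-- Rank characterization of the Kalman matrix. -/
lemma rank_kalman_iff : (kalmanMatrix A B).rank = n ↔
    ∀ v : Fin n → ℝ, (∀ k, k < n → v ᵥ* (A ^ k * B) = 0) → v = 0 := by
  classical
  rw [← Matrix.rank_transpose]
  have hrn := LinearMap.finrank_range_add_finrank_ker ((kalmanMatrix A B)ᵀ).mulVecLin
  have hfin : Module.finrank ℝ (Fin n → ℝ) = n := by simp
  rw [hfin] at hrn
  have hrank : (kalmanMatrix A B)ᵀ.rank
      = Module.finrank ℝ (LinearMap.range ((kalmanMatrix A B)ᵀ).mulVecLin) := rfl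
  have hker : ∀ v : Fin n → ℝ,
      ((kalmanMatrix A B)ᵀ).mulVecLin v = 0 ↔ (∀ k, k < n → v ᵥ* (A ^ k * B) = 0) := by
    intro v
    rw [Matrix.mulVecLin_apply, Matrix.mulVec_transpose]
    constructor
    · intro hv k hk
      funext j
      have := congrFun hv (⟨k, hk⟩, j)
      simpa [kalmanMatrix, Matrix.vecMul, dotProduct] using this
    · intro hv
      funext kj
      have := congrFun (hv kj.1 kj.1.isLt) kj.2
      simpa [kalmanMatrix, Matrix.vecMul, dotProduct] using this
  constructor
  · intro hr v hv
    have hker0 : Module.finrank ℝ (LinearMap.ker ((kalmanMatrix A B)ᵀ).mulVecLin) = 0 := by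
      omega
    rw [Submodule.finrank_eq_zero] at hker0
    have : v ∈ LinearMap.ker ((kalmanMatrix A B)ᵀ).mulVecLin := by
      rw [LinearMap.mem_ker, hker v]; exact hv
    rw [hker0] at this
    simpa using this
  · intro hv
    have : LinearMap.ker ((kalmanMatrix A B)ᵀ).mulVecLin = ⊥ := by
      rw [LinearMap.ker_eq_bot']
      intro v hv0
      exact hv v ((hker v).1 hv0)
    rw [hrank] at *
    rw [this] at hrn
    simpa using hrn


attribute [local instance] Matrix.linftyOpNormedAddCommGroup Matrix.linftyOpNormedRing
  Matrix.linftyOpNormedAlgebra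

/-- `M ↦ v ⬝ᵥ M *ᵥ w` as a continuous linear map. -/
noncomputable def dotMulCLM (v w : Fin n → ℝ) : Matrix (Fin n) (Fin n) ℝ →L[ℝ] ℝ :=
  LinearMap.toContinuousLinearMap
  { toFun := fun M => v ⬝ᵥ M.mulVec w
    map_add' := fun M N => by simp [Matrix.add_mulVec, dotProduct_add]
    map_smul' := fun c M => by simp [Matrix.smul_mulVec, dotProduct_smul] }

@[simp] lemma dotMulCLM_apply (v w : Fin n → ℝ) (M : Matrix (Fin n) (Fin n) ℝ) :
    dotMulCLM v w M = v ⬝ᵥ M.mulVec w := rfl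

/-- `M ↦ M *ᵥ w` as a continuous linear map. -/
noncomputable def mulVecCLM (w : Fin n → ℝ) : Matrix (Fin n) (Fin n) ℝ →L[ℝ] (Fin n → ℝ) :=
  LinearMap.toContinuousLinearMap
  { toFun := fun M => M.mulVec w
    map_add' := fun M N => by simp [Matrix.add_mulVec]
    map_smul' := fun c M => by simp [Matrix.smul_mulVec] }

@[simp] lemma mulVecCLM_apply (w : Fin n → ℝ) (M : Matrix (Fin n) (Fin n) ℝ) :
    mulVecCLM w M = M.mulVec w := rfl

/-- `x ↦ v ⬝ᵥ x` as a continuous linear map. -/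
noncomputable def dotCLM (v : Fin n → ℝ) : (Fin n → ℝ) →L[ℝ] ℝ :=
  LinearMap.toContinuousLinearMap
  { toFun := fun x => v ⬝ᵥ x
    map_add' := fun x y => by simp [dotProduct_add]
    map_smul' := fun c x => by simp [dotProduct_smul] }

@[simp] lemma dotCLM_apply (v x : Fin n → ℝ) : dotCLM v x = v ⬝ᵥ x := rfl

/-- `M ↦ v ᵥ* (C * M * B)` as a continuous linear map. -/
noncomputable def sandwichCLM (v : Fin n → ℝ) (C : Matrix (Fin n) (Fin n) ℝ) :
    Matrix (Fin n) (Fin n) ℝ →L[ℝ] (Fin p → ℝ) :=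
  LinearMap.toContinuousLinearMap
  { toFun := fun M => v ᵥ* (C * M * B)
    map_add' := fun M N => by
      rw [Matrix.mul_add, Matrix.add_mul, Matrix.vecMul_add]
    map_smul' := fun c M => by
      simp only [RingHom.id_apply]
      rw [Matrix.mul_smul, Matrix.smul_mul]
      exact (vecMulLM (p := p) v).map_smul c (C * M * B) }

@[simp] lemma sandwichCLM_apply (v : Fin n → ℝ) (C M : Matrix (Fin n) (Fin n) ℝ) :
    sandwichCLM B v C M = v ᵥ* (C * M * B) := rfl

/-- Series expansion of `v ⬝ᵥ exp(tA) *ᵥ w`. -/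
lemma dot_exp_mulVec (v w : Fin n → ℝ) (t : ℝ) :
    v ⬝ᵥ (NormedSpace.exp (t • A)).mulVec w
      = ∑' k : ℕ, ((k.factorial : ℝ)⁻¹ * t ^ k) * (v ⬝ᵥ (A ^ k).mulVec w) := by
  have hs : Summable fun k : ℕ => ((k.factorial : ℝ)⁻¹) • (t • A) ^ k :=
    expSeries_summable' (𝕂 := ℝ) (t • A)
  have hmap := (dotMulCLM v w).map_tsum hs
  rw [exp_eq_tsum (𝕂 := ℝ)]
  calc v ⬝ᵥ (∑' k : ℕ, ((k.factorial : ℝ)⁻¹) • (t • A) ^ k).mulVec w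
      = dotMulCLM v w (∑' k : ℕ, ((k.factorial : ℝ)⁻¹) • (t • A) ^ k) := rfl
    _ = ∑' k : ℕ, dotMulCLM v w (((k.factorial : ℝ)⁻¹) • (t • A) ^ k) := hmap
    _ = ∑' k : ℕ, ((k.factorial : ℝ)⁻¹ * t ^ k) * (v ⬝ᵥ (A ^ k).mulVec w) := by
        refine tsum_congr fun k => ?_
        rw [smul_pow, smul_smul, _root_.map_smul]
        simp [smul_eq_mul]

/-- Continuity of `s ↦ exp ((t1 - s) • A)`. -/
lemma continuous_expAt (t1 : ℝ) : Continuous fun s : ℝ => NormedSpace.exp ((t1 - s) • A) :=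
  exp_continuous.comp ((continuous_const.sub continuous_id).smul continuous_const)

/-- Derivative of `s ↦ exp ((t1 - s) • A)`. -/
lemma hasDerivAt_expAt (t1 s : ℝ) :
    HasDerivAt (fun s : ℝ => NormedSpace.exp ((t1 - s) • A))
      (-(A * NormedSpace.exp ((t1 - s) • A))) s := by
  have h1 : HasDerivAt (fun τ : ℝ => NormedSpace.exp (τ • A))
      (A * NormedSpace.exp ((t1 - s) • A)) (t1 - s) := hasDerivAt_exp_smul_const' A (t1 - s)
  have h2 : HasDerivAt (fun s : ℝ => t1 - s) (-1 : ℝ) s := by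
    simpa using (hasDerivAt_id s).const_sub t1
  have h3 := h1.scomp s h2
  simp only [neg_smul, one_smul] at h3
  exact h3

/-- If `vᵀ e^{(t1-s)A} B = 0` on `(t0, t1)`, then `vᵀ Aᵏ B = 0` for all `k`. -/
lemma vecMul_pow_eq_zero_of_exp (t0 t1 : ℝ) (ht : t0 < t1) (v : Fin n → ℝ)
    (h : ∀ s ∈ Set.Ioo t0 t1, v ᵥ* (NormedSpace.exp ((t1 - s) • A) * B) = 0) :
    ∀ k, v ᵥ* (A ^ k * B) = 0 := by
  have main : ∀ k, ∀ s ∈ Set.Ioo t0 t1,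
      v ᵥ* (A ^ k * NormedSpace.exp ((t1 - s) • A) * B) = 0 := by
    intro k
    induction k with
    | zero =>
      intro s hs
      simpa [Matrix.one_mul] using h s hs
    | succ k IH =>
      intro s hs
      have hg : ∀ x ∈ Set.Ioo t0 t1,
          (fun s => sandwichCLM B v (A ^ k) (NormedSpace.exp ((t1 - s) • A))) x = (fun _ => (0 : Fin p → ℝ)) x := by
        intro x hx
        simpa using IH x hx
      have hd1 : HasDerivAt (fun s => sandwichCLM B v (A ^ k) (NormedSpace.exp ((t1 - s) • A)))
          (sandwichCLM B v (A ^ k) (-(A * NormedSpace.exp ((t1 - s) • A)))) s :=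
        (sandwichCLM B v (A ^ k)).hasFDerivAt.comp_hasDerivAt s (hasDerivAt_expAt A t1 s)
      have heq : (fun s => sandwichCLM B v (A ^ k) (NormedSpace.exp ((t1 - s) • A)))
          =ᶠ[nhds s] (fun _ => (0 : Fin p → ℝ)) :=
        Filter.eventuallyEq_of_mem (isOpen_Ioo.mem_nhds hs) hg
      have hd2 : HasDerivAt (fun s => sandwichCLM B v (A ^ k) (NormedSpace.exp ((t1 - s) • A)))
          (0 : Fin p → ℝ) s :=
        (hasDerivAt_const s (0 : Fin p → ℝ)).congr_of_eventuallyEq heq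
      have h0 := hd2.unique hd1
      have h1 : v ᵥ* (A ^ k * (A * NormedSpace.exp ((t1 - s) • A)) * B) = 0 := by
        have := h0.symm
        rw [map_neg] at this
        simpa [neg_eq_zero] using this.symm
      have h2 : A ^ (k + 1) * NormedSpace.exp ((t1 - s) • A) = A ^ k * (A * NormedSpace.exp ((t1 - s) • A)) := by
        rw [pow_succ, Matrix.mul_assoc]
      rw [h2]
      exact h1
  intro k
  have hcont : Continuous fun s : ℝ => v ᵥ* (A ^ k * NormedSpace.exp ((t1 - s) • A) * B) :=
    ((sandwichCLM B v (A ^ k)).continuous.comp (continuous_expAt A t1)).congr fun s => rfl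
  have hIoo : Set.EqOn (fun s : ℝ => v ᵥ* (A ^ k * NormedSpace.exp ((t1 - s) • A) * B))
      (fun _ => (0 : Fin p → ℝ)) (Set.Ioo t0 t1) := fun s hs => main k s hs
  have hIcc := hIoo.closure hcont continuous_const
  rw [closure_Ioo ht.ne] at hIcc
  have := hIcc (Set.right_mem_Icc.2 ht.le)
  simpa [sub_self, exp_zero, Matrix.mul_one] using this

end Aux

section Main

attribute [local instance] Matrix.linftyOpNormedAddCommGroup Matrix.linftyOpNormedRing
  Matrix.linftyOpNormedAlgebra

/-- **Kalman's theorem.** The system `x' = Ax + Bu` is controllable on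
`[t0, t1]` if and only if `rank [B, AB, …, A^{n−1}B] = n`. -/
theorem statement_1 (n p : ℕ) (t0 t1 : ℝ) (ht : t0 < t1)
    (A : Matrix (Fin n) (Fin n) ℝ) (B : Matrix (Fin n) (Fin p) ℝ) :
    IsControllableOn A B t0 t1 ↔ (kalmanMatrix A B).rank = n := by
  constructor
  · -- controllable → full rank
    intro hcon
    rw [rank_kalman_iff]
    intro v hv
    have hall : ∀ k, v ᵥ* (A ^ k * B) = 0 := vecMul_pow_mul_eq_zero A B hv
    obtain ⟨u, _, hsol⟩ := hcon 0 v
    rw [Matrix.mulVec_zero, zero_add] at hsol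
    have hterm : ∀ s : ℝ, v ⬝ᵥ (NormedSpace.exp ((t1 - s) • A)).mulVec (B.mulVec (u s)) = 0 := by
      intro s
      rw [dot_exp_mulVec]
      have hz : ∀ k : ℕ, v ⬝ᵥ (A ^ k).mulVec (B.mulVec (u s)) = 0 := by
        intro k
        rw [Matrix.mulVec_mulVec, dotProduct_mulVec, hall k, zero_dotProduct]
      simp only [hz, mul_zero]
      exact tsum_zero
    have hdot : v ⬝ᵥ v = 0 := by
      by_cases hint : IntervalIntegrable
          (fun s => (NormedSpace.exp ((t1 - s) • A)).mulVec (B.mulVec (u s))) volume t0 t1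
      · have hswap := (dotCLM v).intervalIntegral_comp_comm hint
        calc v ⬝ᵥ v
            = dotCLM v (∫ s in t0..t1, (NormedSpace.exp ((t1 - s) • A)).mulVec (B.mulVec (u s))) := by
              rw [hsol, dotCLM_apply]
          _ = ∫ s in t0..t1, dotCLM v ((NormedSpace.exp ((t1 - s) • A)).mulVec (B.mulVec (u s))) :=
              hswap.symm
          _ = ∫ s in t0..t1, (0 : ℝ) := by
              refine intervalIntegral.integral_congr fun s _ => ?_
              rw [dotCLM_apply, hterm s]
          _ = 0 := by simp
      · rw [← hsol, intervalIntegral.integral_undef hint]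
        simp
    exact dotProduct_self_eq_zero.mp hdot
  · -- full rank → controllable
    intro hrank x0 x1
    have hEc : Continuous fun s : ℝ => NormedSpace.exp ((t1 - s) • A) := continuous_expAt A t1
    have hFc : Continuous fun s : ℝ =>
        NormedSpace.exp ((t1 - s) • A) * B * Bᵀ * (NormedSpace.exp ((t1 - s) • A))ᵀ :=
      ((hEc.matrix_mul continuous_const).matrix_mul continuous_const).matrix_mul
        hEc.matrix_transpose
    set G : Matrix (Fin n) (Fin n) ℝ :=
      ∫ s in t0..t1, NormedSpace.exp ((t1 - s) • A) * B * Bᵀ * (NormedSpace.exp ((t1 - s) • A))ᵀ with hG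
    -- the Gramian has trivial kernel
    have hker : ∀ v : Fin n → ℝ, G.mulVec v = 0 → v = 0 := by
      intro v hv
      have hq : ∀ s : ℝ, dotMulCLM v v
            (NormedSpace.exp ((t1 - s) • A) * B * Bᵀ * (NormedSpace.exp ((t1 - s) • A))ᵀ)
          = (v ᵥ* (NormedSpace.exp ((t1 - s) • A) * B)) ⬝ᵥ (v ᵥ* (NormedSpace.exp ((t1 - s) • A) * B)) := by
        intro s
        rw [dotMulCLM_apply]
        have h1 : NormedSpace.exp ((t1 - s) • A) * B * Bᵀ * (NormedSpace.exp ((t1 - s) • A))ᵀ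
            = (NormedSpace.exp ((t1 - s) • A) * B) * (NormedSpace.exp ((t1 - s) • A) * B)ᵀ := by
          rw [Matrix.transpose_mul, Matrix.mul_assoc]
        rw [h1, ← Matrix.mulVec_mulVec, dotProduct_mulVec, Matrix.mulVec_transpose]
      have hInt0 : ∫ s in t0..t1,
          (v ᵥ* (NormedSpace.exp ((t1 - s) • A) * B)) ⬝ᵥ (v ᵥ* (NormedSpace.exp ((t1 - s) • A) * B)) = 0 := by
        have hswap := (dotMulCLM v v).intervalIntegral_comp_comm (hFc.intervalIntegrable (μ := volume) t0 t1)
        calc ∫ s in t0..t1,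
              (v ᵥ* (NormedSpace.exp ((t1 - s) • A) * B)) ⬝ᵥ (v ᵥ* (NormedSpace.exp ((t1 - s) • A) * B))
            = ∫ s in t0..t1, dotMulCLM v v
                (NormedSpace.exp ((t1 - s) • A) * B * Bᵀ * (NormedSpace.exp ((t1 - s) • A))ᵀ) := by
              refine intervalIntegral.integral_congr fun s _ => ?_
              rw [hq s]
          _ = dotMulCLM v v G := hswap
          _ = 0 := by rw [dotMulCLM_apply, hv, dotProduct_zero]
      have hqc : Continuous fun s : ℝ =>
          (v ᵥ* (NormedSpace.exp ((t1 - s) • A) * B)) ⬝ᵥ (v ᵥ* (NormedSpace.exp ((t1 - s) • A) * B)) :=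
        ((dotMulCLM v v).continuous.comp hFc).congr fun s => hq s
      have hnonneg : ∀ s : ℝ, 0 ≤
          (v ᵥ* (NormedSpace.exp ((t1 - s) • A) * B)) ⬝ᵥ (v ᵥ* (NormedSpace.exp ((t1 - s) • A) * B)) :=
        fun s => Finset.sum_nonneg fun i _ => mul_self_nonneg _
      have hae := (intervalIntegral.integral_eq_zero_iff_of_le_of_nonneg_ae ht.le
        (Filter.Eventually.of_forall fun s => hnonneg s)
        (hqc.intervalIntegrable (μ := volume) t0 t1)).1 hInt0
      have hae' := ae_restrict_of_ae_restrict_of_subset Set.Ioo_subset_Ioc_self hae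
      have hEqOn := MeasureTheory.Measure.eqOn_open_of_ae_eq hae' isOpen_Ioo
        hqc.continuousOn continuousOn_const
      have hvB : ∀ s ∈ Set.Ioo t0 t1, v ᵥ* (NormedSpace.exp ((t1 - s) • A) * B) = 0 := by
        intro s hs
        exact dotProduct_self_eq_zero.mp (hEqOn hs)
      have hall := vecMul_pow_eq_zero_of_exp A B t0 t1 ht v hvB
      exact (rank_kalman_iff A B).mp hrank v fun k _ => hall k
    have hkerbot : LinearMap.ker G.mulVecLin = ⊥ :=
      LinearMap.ker_eq_bot'.mpr fun v hv => hker v (by simpa using hv)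
    have hinj : Function.Injective G.mulVecLin := LinearMap.ker_eq_bot.mp hkerbot
    have hsurj : Function.Surjective G.mulVecLin :=
      LinearMap.injective_iff_surjective.mp hinj
    obtain ⟨w, hw⟩ := hsurj (x1 - (NormedSpace.exp ((t1 - t0) • A)).mulVec x0)
    rw [Matrix.mulVecLin_apply] at hw
    refine ⟨fun s => Bᵀ.mulVec ((NormedSpace.exp ((t1 - s) • A))ᵀ.mulVec w), ?_, ?_⟩
    · have huc : Continuous fun s : ℝ => Bᵀ.mulVec ((NormedSpace.exp ((t1 - s) • A))ᵀ.mulVec w) :=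
        continuous_const.matrix_mulVec (hEc.matrix_transpose.matrix_mulVec continuous_const)
      haveI : IsFiniteMeasure (volume.restrict (Set.Ioc t0 t1)) :=
        ⟨by rw [Measure.restrict_apply_univ]; exact measure_Ioc_lt_top⟩
      obtain ⟨C, hC⟩ :=
        (isCompact_Icc (a := t0) (b := t1)).exists_bound_of_continuousOn huc.continuousOn
      exact MemLp.of_bound huc.aestronglyMeasurable C
        ((ae_restrict_mem measurableSet_Ioc).mono fun s hs => hC s (Set.Ioc_subset_Icc_self hs))
    · have hpt : ∀ s : ℝ, (NormedSpace.exp ((t1 - s) • A)).mulVec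
          (B.mulVec (Bᵀ.mulVec ((NormedSpace.exp ((t1 - s) • A))ᵀ.mulVec w)))
          = (NormedSpace.exp ((t1 - s) • A) * B * Bᵀ * (NormedSpace.exp ((t1 - s) • A))ᵀ).mulVec w := by
        intro s
        simp [Matrix.mulVec_mulVec, Matrix.mul_assoc]
      have hswap : ∫ s in t0..t1,
          (NormedSpace.exp ((t1 - s) • A) * B * Bᵀ * (NormedSpace.exp ((t1 - s) • A))ᵀ).mulVec w
          = G.mulVec w := by
        have := (mulVecCLM w).intervalIntegral_comp_comm (hFc.intervalIntegrable (μ := volume) t0 t1)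
        exact this
      calc (NormedSpace.exp ((t1 - t0) • A)).mulVec x0 + ∫ s in t0..t1, (NormedSpace.exp ((t1 - s) • A)).mulVec
            (B.mulVec (Bᵀ.mulVec ((NormedSpace.exp ((t1 - s) • A))ᵀ.mulVec w)))
          = (NormedSpace.exp ((t1 - t0) • A)).mulVec x0 + ∫ s in t0..t1,
            (NormedSpace.exp ((t1 - s) • A) * B * Bᵀ * (NormedSpace.exp ((t1 - s) • A))ᵀ).mulVec w := by
            rw [intervalIntegral.integral_congr fun s _ => hpt s]
        _ = (NormedSpace.exp ((t1 - t0) • A)).mulVec x0 + G.mulVec w := by rw [hswap]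
        _ = x1 := by rw [hw]; abel

end Main
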